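/- arXiv:1011.6505 — 7 statements merged into one kernel-verified Lean document; each statement's English description precedes it below -/
import Mathlib

section
/- Every ideal I of F_q[x_1,…,x_n] that contains x_i^q − x_i for all i = 1, …, n is a radical ideal. Equivalently, every ideal of the quotient ring R_q = F_q[x_1,…,x_n]/(x_1^q − x_1, …, x_n^q − x_n) is radical. -/
/-!
In `R = F[x₁,…,xₙ] ⧸ I` the Frobenius `a ↦ a ^ q` is an `F`-algebra endomorphism fixing every
`xᵢ`, hence the identity. So `a = a ^ q ^ m` for all `m`, and `a ^ m = 0` forces `a = 0`:
`R` is reduced, i.e. `I` is radical.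
-/

open MvPolynomial

theorem pow_pow_eq_self_of_pow_eq_self {M : Type*} [Monoid M] {q : ℕ} {a : M} (h : a ^ q = a)
    (m : ℕ) : a ^ q ^ m = a := by
  induction m with
  | zero => simp
  | succ m ih => rw [pow_succ, pow_mul, ih, h]

theorem isReduced_of_forall_pow_eq_self {M : Type*} [MonoidWithZero M] {q : ℕ} (hq : 1 < q)
    (h : ∀ a : M, a ^ q = a) : IsReduced M where
  eq_zero a := by
    rintro ⟨m, hm⟩
    rw [← pow_pow_eq_self_of_pow_eq_self (h a) m]
    exact pow_eq_zero_of_le (Nat.lt_pow_self hq).le hm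

theorem MvPolynomial.algHom_pow_card_eq_self {K σ A : Type*} [Field K] [Fintype K] [CommRing A]
    [Algebra K A] (φ : MvPolynomial σ K →ₐ[K] A) (h : ∀ i, φ (X i) ^ Fintype.card K = φ (X i))
    (f : MvPolynomial σ K) : φ f ^ Fintype.card K = φ f := by
  have : (FiniteField.frobeniusAlgHom K A).comp φ = φ := algHom_ext h
  exact AlgHom.congr_fun this f

/-- Every ideal of `F_q[x_1,…,x_n]` containing `x_i^q − x_i` for all `i`
is a radical ideal. -/
theorem stmt_2 {F : Type*} [Field F] [Fintype F] {n : ℕ}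
    (I : Ideal (MvPolynomial (Fin n) F))
    (hI : ∀ i : Fin n, X i ^ Fintype.card F - X i ∈ I) :
    I.IsRadical := by
  rw [Ideal.isRadical_iff_quotient_reduced]
  refine isReduced_of_forall_pow_eq_self (Fintype.one_lt_card (α := F)) fun a => ?_
  obtain ⟨f, rfl⟩ := Ideal.Quotient.mk_surjective a
  refine algHom_pow_card_eq_self (Ideal.Quotient.mkₐ F I) (fun i => ?_) f
  rw [← map_pow, Ideal.Quotient.mkₐ_eq_mk, Ideal.Quotient.eq]
  exact hI i
end

section
/- Let I be an ideal of F_q[x_1,…,x_n] containing x_i^q − x_i for all i, and let (a_1,…,a_n) ∈ F_q^n. Then I equals the ideal (x_1 − a_1, …, x_n − a_n) if and only if (a_1,…,a_n) is the unique common zero of I in F_q^n. -/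
open MvPolynomial

/-!
The ideal `(x_1 - a_1, …, x_n - a_n)` is the kernel of evaluation at `a`, so one inclusion is
just `a` being a zero of `I`. For the other, the field equations give `f ^ q - f ∈ I` for every
`f`, hence `I` is radical and equals the intersection of the primes containing it. A prime
containing `x_i ^ q - x_i = ∏_c (x_i - c)` contains some `x_i - b_i` for each `i`, so it is the
maximal ideal of a point `b`, which is a zero of `I`; by uniqueness `b = a`.
-/

namespace MvPolynomial

variable {R σ : Type*} [CommRing R]

theorem sub_C_eval_mem_span_X_sub_C (a : σ → R) (f : MvPolynomial σ R) :
    f - C (eval a f) ∈ Ideal.span (Set.range fun i => X i - C (a i)) := by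
  set M := Ideal.span (Set.range fun i => X i - C (a i))
  induction f using MvPolynomial.induction_on with
  | C c => simp
  | add f g hf hg =>
    convert M.add_mem hf hg using 1
    simp only [map_add]; ring
  | mul_X f i hf =>
    have hX : X i - C (a i) ∈ M := Ideal.subset_span ⟨i, rfl⟩
    convert M.add_mem (M.mul_mem_left f hX) (M.mul_mem_left (C (a i)) hf) using 1
    simp only [map_mul, eval_X]; ring

theorem span_X_sub_C_eq_ker_eval (a : σ → R) :
    Ideal.span (Set.range fun i => X i - C (a i)) = RingHom.ker (eval a) := by
  refine le_antisymm (Ideal.span_le.2 ?_) fun f hf => ?_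
  · rintro _ ⟨i, rfl⟩
    simp [RingHom.mem_ker]
  · simpa [(RingHom.mem_ker).1 hf] using sub_C_eval_mem_span_X_sub_C a f

end MvPolynomial

theorem FiniteField.pow_card_sub_self_eq_prod {K A : Type*} [Field K] [Fintype K] [CommRing A]
    [Algebra K A] (x : A) : x ^ Fintype.card K - x = ∏ c : K, (x - algebraMap K A c) := by
  have hq : 1 < Fintype.card K := Fintype.one_lt_card
  have hmonic : (Polynomial.X ^ Fintype.card K - Polynomial.X : Polynomial K).Monic :=
    Polynomial.monic_X_pow_sub (Polynomial.degree_X_le.trans_lt (by exact_mod_cast hq))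
  have hroots := FiniteField.roots_X_pow_card_sub_X K
  have hprod := Polynomial.prod_multiset_X_sub_C_of_monic_of_roots_card_eq hmonic (by
    rw [hroots, FiniteField.X_pow_card_sub_X_natDegree_eq K hq]; rfl)
  rw [hroots, ← Finset.prod_eq_multiset_prod] at hprod
  simpa [map_prod] using congrArg (Polynomial.aeval x) hprod.symm

theorem Ideal.IsPrime.exists_sub_algebraMap_mem {K A : Type*} [Field K] [Fintype K] [CommRing A]
    [Algebra K A] {P : Ideal A} (hP : P.IsPrime) {x : A} (hx : x ^ Fintype.card K - x ∈ P) :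
    ∃ c : K, x - algebraMap K A c ∈ P := by
  rw [FiniteField.pow_card_sub_self_eq_prod] at hx
  obtain ⟨c, -, hc⟩ := hP.prod_mem_iff.1 hx
  exact ⟨c, hc⟩

theorem Ideal.isRadical_of_forall_pow_sub_self_mem {A : Type*} [CommRing A] {I : Ideal A} {q : ℕ}
    (hq : 1 < q) (h : ∀ f, f ^ q - f ∈ I) : I.IsRadical := by
  rw [Ideal.isRadical_iff_quotient_reduced]
  have hfix : ∀ (x : A ⧸ I) j, x ^ q ^ j = x := by
    intro x j
    obtain ⟨f, rfl⟩ := Ideal.Quotient.mk_surjective x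
    induction j with
    | zero => simp
    | succ j ih => rw [pow_succ, pow_mul, ih, ← map_pow, Ideal.Quotient.eq.2 (h f)]
  refine ⟨fun x ⟨m, hm⟩ => ?_⟩
  rw [← hfix x m, ← Nat.add_sub_cancel' (Nat.lt_pow_self hq).le, pow_add, hm, zero_mul]

namespace MvPolynomial

variable {K σ : Type*} [Field K] [Fintype K]

theorem pow_card_sub_self_mem {I : Ideal (MvPolynomial σ K)}
    (hI : ∀ i, X i ^ Fintype.card K - X i ∈ I) (f : MvPolynomial σ K) :
    f ^ Fintype.card K - f ∈ I := by
  -- `f ↦ f ^ q` is an iterated Frobenius, and modulo `I` it fixes both the constants and the `X i`.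
  obtain ⟨p, _, k, hp, hcard⟩ := FiniteField.card' K
  have : Fact p.Prime := ⟨hp⟩
  have : (Ideal.Quotient.mk I).comp (iterateFrobenius _ p k) = Ideal.Quotient.mk I := by
    refine ringHom_ext (fun c => ?_) (fun i => ?_)
    · simp [iterateFrobenius_def, ← hcard, ← C_pow, FiniteField.pow_card]
    · simpa [iterateFrobenius_def, ← hcard] using Ideal.Quotient.eq.2 (hI i)
  simpa [iterateFrobenius_def, ← hcard] using Ideal.Quotient.eq.1 (RingHom.congr_fun this f)

theorem exists_eq_ker_eval_of_isPrime {P : Ideal (MvPolynomial σ K)} (hP : P.IsPrime)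
    (h : ∀ i, X i ^ Fintype.card K - X i ∈ P) : ∃ b : σ → K, P = RingHom.ker (eval b) := by
  choose b hb using fun i => hP.exists_sub_algebraMap_mem (h i)
  have hle : RingHom.ker (eval b) ≤ P := by
    rw [← span_X_sub_C_eq_ker_eval, Ideal.span_le]
    rintro _ ⟨i, rfl⟩
    exact hb i
  have : (RingHom.ker (eval b)).IsMaximal :=
    RingHom.ker_isMaximal_of_surjective _ fun c => ⟨C c, eval_C c⟩
  exact ⟨b, (this.eq_of_le hP.ne_top hle).symm⟩

end MvPolynomial

/-- Let `I` be an ideal of `F_q[x_1,…,x_n]` containing `x_i^q − x_i` for all `i`,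
and let `a ∈ F_q^n`. Then `I = (x_1 − a_1, …, x_n − a_n)` iff `a` is the unique common zero
of `I` in `F_q^n`. -/
theorem stmt_3 {F : Type*} [Field F] [Fintype F] {n : ℕ}
    (I : Ideal (MvPolynomial (Fin n) F))
    (hI : ∀ i : Fin n, X i ^ Fintype.card F - X i ∈ I) (a : Fin n → F) :
    I = Ideal.span (Set.range fun i : Fin n => X i - C (a i)) ↔
      (∀ P ∈ I, eval a P = 0) ∧
        ∀ b : Fin n → F, (∀ P ∈ I, eval b P = 0) → b = a := by
  rw [span_X_sub_C_eq_ker_eval]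
  constructor
  · rintro rfl
    refine ⟨fun P hP => hP, fun b hb => funext fun i => ?_⟩
    have hXi := hb (X i - C (a i)) (by simp)
    rwa [map_sub, eval_X, eval_C, sub_eq_zero] at hXi
  · rintro ⟨ha, huniq⟩
    refine le_antisymm (fun P hP => ha P hP) ?_
    have hrad : I.IsRadical :=
      Ideal.isRadical_of_forall_pow_sub_self_mem Fintype.one_lt_card (pow_card_sub_self_mem hI)
    rw [← hrad.radical, Ideal.radical_eq_sInf]
    refine le_sInf fun P ⟨hIP, hP⟩ => ?_
    obtain ⟨b, rfl⟩ := exists_eq_ker_eval_of_isPrime hP fun i => hIP (hI i)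
    rw [huniq b fun f hf => hIP hf]
end

section
/- Let I be an ideal of F_q[x_1,…,x_n] containing x_i^q − x_i for all i. Then I is the unit ideal (1) if and only if I has no common zero in F_q^n. -/
/-!
If `I` has no common zero it cannot be proper: a maximal ideal `m ⊇ I` gives a field
`K = F[x]/m` in which each `xᵢ` is a root of `X^q - X`. Over `F` this polynomial splits with
the `q` elements of `F` as roots, so each `xᵢ` is congruent mod `m` to some `aᵢ ∈ F`. Then every
`P ∈ I` has `P(a) ≡ P ≡ 0 mod m`, i.e. `a` is a common zero.
-/

theorem FiniteField.splits_X_pow_card_sub_X_self (K : Type*) [Field K] [Fintype K] :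
    (Polynomial.X ^ Fintype.card K - Polynomial.X : Polynomial K).Splits := by
  rw [Polynomial.splits_iff_card_roots, FiniteField.roots_X_pow_card_sub_X,
    FiniteField.X_pow_card_sub_X_natDegree_eq K Fintype.one_lt_card]
  rfl

theorem FiniteField.mem_range_algebraMap_of_pow_card_eq_self {K L : Type*} [Field K] [Fintype K]
    [CommRing L] [IsDomain L] [Algebra K L] {x : L} (hx : x ^ Fintype.card K = x) :
    x ∈ (algebraMap K L).range :=
  (FiniteField.splits_X_pow_card_sub_X_self K).mem_range_of_isRoot
    (FiniteField.X_pow_card_sub_X_ne_zero K Fintype.one_lt_card) (by simp [hx])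

open MvPolynomial

theorem MvPolynomial.exists_algHom_eq_algebraMap_eval {σ F L : Type*} [CommSemiring F]
    [CommSemiring L] [Algebra F L] (φ : MvPolynomial σ F →ₐ[F] L)
    (hφ : ∀ i, φ (X i) ∈ Set.range (algebraMap F L)) :
    ∃ a : σ → F, ∀ P, φ P = algebraMap F L (eval a P) := by
  choose a ha using hφ
  refine ⟨a, fun P => ?_⟩
  have hext : φ = (Algebra.ofId F L).comp (aeval a) := algHom_ext fun i => by simp [ha]
  rw [hext, AlgHom.comp_apply, Algebra.ofId_apply, aeval_eq_eval]

/-- Let `I` be an ideal of `F_q[x_1,…,x_n]` containing `x_i^q − x_i` for all `i`.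
Then `I` is the unit ideal iff `I` has no common zero in `F_q^n`. -/
theorem stmt_4 {F : Type*} [Field F] [Fintype F] {n : ℕ}
    (I : Ideal (MvPolynomial (Fin n) F))
    (hI : ∀ i : Fin n, X i ^ Fintype.card F - X i ∈ I) :
    I = ⊤ ↔ ¬ ∃ a : Fin n → F, ∀ P ∈ I, eval a P = 0 := by
  refine ⟨?_, fun hzero => by_contra fun hI_ne_top => hzero ?_⟩
  · rintro rfl ⟨a, ha⟩
    simpa using ha 1 Submodule.mem_top
  obtain ⟨m, hm, hIm⟩ := Ideal.exists_le_maximal I hI_ne_top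
  let φ := Ideal.Quotient.mkₐ F m
  have hφ_eq_zero : ∀ P ∈ I, φ P = 0 := fun P hP =>
    Ideal.Quotient.eq_zero_iff_mem.mpr (hIm hP)
  have hφX : ∀ i, φ (X i) ∈ Set.range (algebraMap F (MvPolynomial (Fin n) F ⧸ m)) := fun i =>
    FiniteField.mem_range_algebraMap_of_pow_card_eq_self <| by
      rw [← map_pow, ← sub_eq_zero, ← map_sub, hφ_eq_zero _ (hI i)]
  obtain ⟨a, ha⟩ := exists_algHom_eq_algebraMap_eval φ hφX
  refine ⟨a, fun P hP => (algebraMap F (MvPolynomial (Fin n) F ⧸ m)).injective ?_⟩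
  rw [← ha, hφ_eq_zero P hP, map_zero]
end

section
/- Let P ∈ F_q[x_1,…,x_n]. Then: (1) P vanishes at every point of F_q^n if and only if P lies in the ideal generated by x_1^q − x_1, …, x_n^q − x_n; and (2) P has no zero in F_q^n if and only if P^{q−1} − 1 lies in the ideal generated by x_1^q − x_1, …, x_n^q − x_n. -/
/-!
Over `F_q`, the polynomial `x^q - x` is `∏_{r ∈ F_q} (x - r)`, so a polynomial vanishing on
`F_q^n = ∏_i F_q` lies in the ideal of the `x_i^q - x_i` by Alon's Combinatorial Nullstellensatz;
the converse holds because `r^q = r` on `F_q`. Part (2) reduces to part (1) since, by Fermat,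
`P^{q-1} - 1` vanishes exactly at the points where `P` does not.
-/

theorem FiniteField.prod_X_sub_C_eq_X_pow_card_sub_X (F : Type*) [Field F] [Fintype F] :
    ∏ r : F, (Polynomial.X - Polynomial.C r) = Polynomial.X ^ Fintype.card F - Polynomial.X := by
  have hq : 1 < Fintype.card F := Fintype.one_lt_card
  have hmonic : (Polynomial.X ^ Fintype.card F - Polynomial.X : Polynomial F).Monic :=
    Polynomial.monic_X_pow_sub (by rwa [Polynomial.degree_X, Nat.one_lt_cast])
  rw [Finset.prod_eq_multiset_prod, ← FiniteField.roots_X_pow_card_sub_X]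
  exact Polynomial.prod_multiset_X_sub_C_of_monic_of_roots_card_eq hmonic
    (by rw [FiniteField.roots_X_pow_card_sub_X, FiniteField.X_pow_card_sub_X_natDegree_eq F hq]; rfl)

namespace MvPolynomial

variable {σ F : Type*} [Field F] [Fintype F]

theorem prod_X_sub_C_eq_X_pow_card_sub_X (i : σ) :
    ∏ r : F, (X i - C r : MvPolynomial σ F) = X i ^ Fintype.card F - X i := by
  simpa [map_prod] using congrArg (Polynomial.aeval (X i : MvPolynomial σ F))
    (FiniteField.prod_X_sub_C_eq_X_pow_card_sub_X F)

theorem span_X_pow_card_sub_X_le_ker_eval (a : σ → F) :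
    Ideal.span (Set.range fun i : σ => X i ^ Fintype.card F - X i) ≤ RingHom.ker (eval a) := by
  rw [Ideal.span_le]
  rintro _ ⟨i, rfl⟩
  simp [FiniteField.pow_card]

theorem mem_span_X_pow_card_sub_X_iff [Finite σ] {P : MvPolynomial σ F} :
    P ∈ Ideal.span (Set.range fun i : σ => X i ^ Fintype.card F - X i) ↔ ∀ a, eval a P = 0 := by
  refine ⟨fun hP a => span_X_pow_card_sub_X_le_ker_eval a hP, fun hP => ?_⟩
  obtain ⟨h, -, rfl⟩ := combinatorial_nullstellensatz_exists_linearCombination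
    (fun _ => Finset.univ) (fun _ => Finset.univ_nonempty) P (fun a _ => hP a)
  simp only [prod_X_sub_C_eq_X_pow_card_sub_X]
  rw [Ideal.span, ← Finsupp.range_linearCombination]
  exact LinearMap.mem_range_self _ h

theorem pow_card_sub_one_sub_one_mem_span_X_pow_card_sub_X_iff [Finite σ]
    {P : MvPolynomial σ F} :
    P ^ (Fintype.card F - 1) - 1 ∈ Ideal.span (Set.range fun i : σ => X i ^ Fintype.card F - X i) ↔
      ∀ a, eval a P ≠ 0 := by
  rw [mem_span_X_pow_card_sub_X_iff]
  refine forall_congr' fun a => ?_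
  rw [map_sub, map_pow, map_one, sub_eq_zero]
  refine ⟨fun h h0 => ?_, FiniteField.pow_card_sub_one_eq_one _⟩
  rw [h0, zero_pow (Nat.sub_ne_zero_of_lt Fintype.one_lt_card)] at h
  exact zero_ne_one h

end MvPolynomial

open MvPolynomial

/-- For `P ∈ F_q[x_1,…,x_n]`:
(1) `P` vanishes at every point of `F_q^n` iff `P` lies in the ideal generated by the
field polynomials `x_i^q − x_i`; and
(2) `P` has no zero in `F_q^n` iff `P^{q−1} − 1` lies in that ideal. -/
theorem stmt_5 {F : Type*} [Field F] [Fintype F] {n : ℕ} (P : MvPolynomial (Fin n) F) :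
    ((∀ a : Fin n → F, eval a P = 0) ↔
        P ∈ Ideal.span (Set.range fun i : Fin n => X i ^ Fintype.card F - X i)) ∧
      ((¬ ∃ a : Fin n → F, eval a P = 0) ↔
        P ^ (Fintype.card F - 1) - 1 ∈
          Ideal.span (Set.range fun i : Fin n => X i ^ Fintype.card F - X i)) :=
  ⟨mem_span_X_pow_card_sub_X_iff.symm,
    not_exists.trans pow_card_sub_one_sub_one_mem_span_X_pow_card_sub_X_iff.symm⟩
end

section
/- For any polynomials U, V ∈ F_q[x_1,…,x_n], the ideal generated by U^{q−1}·V^{q−1} − U^{q−1} − V^{q−1} together with HS equals the ideal generated by U and V together with HS. Equivalently, in the quotient ring R_q = F_q[x_1,…,x_n]/(HS), the ideal (U^{q−1}V^{q−1} − U^{q−1} − V^{q−1}) equals the ideal (U, V). -/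
/-!
Work in `R_q = F_q[x_1,…,x_n]/(HS)`. There the `q`-th power map is an `F_q`-algebra endomorphism
fixing every `x_i`, so `a ^ q = a` for all `a`. In such a ring, writing
`W = u^{q-1} v^{q-1} - u^{q-1} - v^{q-1}`, we have `u * W = -u` and `v * W = -v`, while `W` is
visibly a combination of `u` and `v`; hence `(W) = (u, v)`. The ideals of `F_q[x_1,…,x_n]`
containing `HS` correspond to the ideals of `R_q`.
-/

open MvPolynomial

theorem MvPolynomial.pow_card_eq_self_mod_X_pow_card_sub_X {σ F : Type*} [Field F] [Fintype F]
    (a : MvPolynomial σ F ⧸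
      Ideal.span (Set.range fun i : σ => (X i : MvPolynomial σ F) ^ Fintype.card F - X i)) :
    a ^ Fintype.card F = a := by
  suffices FiniteField.frobeniusAlgHom F _ = AlgHom.id F _ from congr($this a)
  refine Ideal.Quotient.algHom_ext F (MvPolynomial.algHom_ext fun i => ?_)
  simp only [AlgHom.coe_comp, Ideal.Quotient.mkₐ_eq_mk, Function.comp_apply,
    FiniteField.frobeniusAlgHom_apply, ← map_pow, AlgHom.id_comp,
    Ideal.Quotient.mk_eq_mk_iff_sub_mem]
  exact Ideal.subset_span ⟨i, rfl⟩

theorem Ideal.span_singleton_eq_span_pair_of_pow_eq_self {R : Type*} [CommRing R] {q : ℕ}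
    (hq : 2 ≤ q) (h : ∀ a : R, a ^ q = a) (u v : R) :
    span {u ^ (q - 1) * v ^ (q - 1) - u ^ (q - 1) - v ^ (q - 1)} = span {u, v} := by
  obtain ⟨m, rfl⟩ := Nat.exists_eq_add_of_le' hq
  rw [show m + 2 - 1 = m + 1 from rfl]
  have absorb (a : R) : a * a ^ (m + 1) = a := by rw [← pow_succ', h]
  apply le_antisymm
  · exact (span_singleton_le_iff_mem _).2 <| mem_span_pair.2
      ⟨u ^ m * v ^ (m + 1) - u ^ m, -v ^ m, by ring⟩
  · rw [span_le, Set.insert_subset_iff, Set.singleton_subset_iff]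
    exact ⟨mem_span_singleton'.2 ⟨-u, by linear_combination (1 - v ^ (m + 1)) * absorb u⟩,
      mem_span_singleton'.2 ⟨-v, by linear_combination (1 - u ^ (m + 1)) * absorb v⟩⟩

theorem Ideal.span_sup_eq_comap_span_image {R : Type*} [CommRing R] (s : Set R) (J : Ideal R) :
    span s ⊔ J = comap (Quotient.mk J) (span (Quotient.mk J '' s)) := by
  rw [← map_span, comap_map_of_surjective _ Quotient.mk_surjective, ← RingHom.ker_eq_comap_bot,
    mk_ker]

/-- For `U, V ∈ F_q[x_1,…,x_n]`, the ideal generated by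
`U^{q−1}·V^{q−1} − U^{q−1} − V^{q−1}` together with the field polynomials equals the ideal
generated by `U` and `V` together with the field polynomials. -/
theorem stmt_8 {F : Type*} [Field F] [Fintype F] {n : ℕ}
    (U V : MvPolynomial (Fin n) F) :
    Ideal.span ({U ^ (Fintype.card F - 1) * V ^ (Fintype.card F - 1) -
          U ^ (Fintype.card F - 1) - V ^ (Fintype.card F - 1)} ∪
        Set.range fun i : Fin n => X i ^ Fintype.card F - X i) =
      Ideal.span ({U, V} ∪
        Set.range fun i : Fin n => X i ^ Fintype.card F - X i) := by
  rw [Ideal.span_union, Ideal.span_union, Ideal.span_sup_eq_comap_span_image,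
    Ideal.span_sup_eq_comap_span_image, Set.image_singleton, Set.image_pair]
  simpa only [map_sub, map_mul, map_pow] using congr_arg (Ideal.comap _) <|
    Ideal.span_singleton_eq_span_pair_of_pow_eq_self Fintype.one_lt_card
      pow_card_eq_self_mod_X_pow_card_sub_X (Ideal.Quotient.mk _ U) (Ideal.Quotient.mk _ V)
end

section
/- Any strictly decreasing sequence of triangular sets A_1 ≻ A_2 ≻ … ≻ A_m in R_q has length m ≤ q^n. -/
open MvPolynomial

/-- The class of a polynomial: the largest `c` such that `x_c` occurs in `P`,
with variables numbered `1,…,n` (variable `Fin`-index `i` has number `i+1`);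
`cls P = 0` for constants. -/
noncomputable def cls {F : Type*} [CommSemiring F] {n : ℕ}
    (P : MvPolynomial (Fin n) F) : ℕ :=
  P.vars.sup fun i => (i : ℕ) + 1

/-- The leading degree of a polynomial: its degree in its leading variable
(`0` for constants). -/
noncomputable def ldeg {F : Type*} [CommSemiring F] {n : ℕ}
    (P : MvPolynomial (Fin n) F) : ℕ :=
  P.vars.sup fun i => if (i : ℕ) + 1 = cls P then degreeOf i P else 0

/-- `P ≺ Q` : `P` has lower ordering than `Q`. -/
def polyLT {F : Type*} [CommSemiring F] {n : ℕ}
    (P Q : MvPolynomial (Fin n) F) : Prop :=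
  cls P < cls Q ∨ (cls P = cls Q ∧ ldeg P < ldeg Q)

/-- `P ∼ Q` : neither `P ≺ Q` nor `Q ≺ P`. -/
def polySim {F : Type*} [CommSemiring F] {n : ℕ}
    (P Q : MvPolynomial (Fin n) F) : Prop :=
  ¬ polyLT P Q ∧ ¬ polyLT Q P

/-- A triangular set: either a single nonzero constant (trivial triangular set), or a
nonempty sequence of nonzero polynomials of positive, strictly increasing classes. -/
def IsTriSet {F : Type*} [CommSemiring F] {n : ℕ}
    (A : List (MvPolynomial (Fin n) F)) : Prop :=
  (∃ c : F, c ≠ 0 ∧ A = [C c]) ∨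
    (A ≠ [] ∧ (∀ P ∈ A, P ≠ 0) ∧ (∀ P ∈ A, 0 < cls P) ∧
      A.Chain' fun P Q => cls P < cls Q)

/-- `A ≺ B` for triangular sets: either there is `k` with `A_i ∼ B_i` for `i < k` and
`A_k ≺ B_k`, or `A` is longer than `B` and `A_i ∼ B_i` for all valid indices of `B`. -/
def triLT {F : Type*} [CommSemiring F] {n : ℕ}
    (A B : List (MvPolynomial (Fin n) F)) : Prop :=
  (∃ k, k < A.length ∧ k < B.length ∧
      (∀ i, i < k → polySim (A.getD i 0) (B.getD i 0)) ∧
      polyLT (A.getD k 0) (B.getD k 0)) ∨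
    (B.length < A.length ∧ ∀ i, i < B.length → polySim (A.getD i 0) (B.getD i 0))

/-!
Code a triangular set `A` by the vector indexed by the classes `c = 1, …, n` whose `c`-th entry
is `ldeg P - 1` for the member `P` of `A` of class `c`, and `q - 1` if there is none; the trivial
triangular set gets `⊥`. Under the lexicographic order (lower classes first) `A ≺ B` makes the
code of `A` strictly smaller. The codes of canonical triangular sets are vectors in
`{0, …, q - 1}ⁿ` other than the constant `q - 1` (the first member has `ldeg ≤ q - 1`), or `⊥`:
at most `q ^ n` values, so a strictly decreasing chain has at most `q ^ n` terms.
-/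

section Polynomial
variable {F : Type*} [CommSemiring F] {n : ℕ}

lemma cls_le (P : MvPolynomial (Fin n) F) : cls P ≤ n :=
  Finset.sup_le fun i _ => i.isLt

lemma cls_C (c : F) : cls (C c : MvPolynomial (Fin n) F) = 0 := by
  simp [cls, vars_C]

lemma ldeg_C (c : F) : ldeg (C c : MvPolynomial (Fin n) F) = 0 := by
  simp [ldeg, vars_C]

lemma ldeg_pos_of_cls_pos {P : MvPolynomial (Fin n) F} (h : 0 < cls P) : 0 < ldeg P := by
  have hne : P.vars.Nonempty := by
    rw [Finset.nonempty_iff_ne_empty]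
    rintro hP
    simp [cls, hP] at h
  obtain ⟨i, hi, hsup⟩ := Finset.exists_mem_eq_sup P.vars hne fun i => (i : ℕ) + 1
  have hdeg : 0 < degreeOf i P := Nat.pos_of_ne_zero (mem_vars_iff_degreeOf_ne_zero.mp hi)
  have hle := Finset.le_sup (f := fun i : Fin n =>
    if (i : ℕ) + 1 = cls P then degreeOf i P else 0) hi
  rw [if_pos (show (i : ℕ) + 1 = cls P from hsup.symm)] at hle
  exact hdeg.trans_le hle

lemma ldeg_le_of_degreeOf_le {P : MvPolynomial (Fin n) F} {d : ℕ} (h : ∀ j, degreeOf j P ≤ d) :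
    ldeg P ≤ d :=
  Finset.sup_le fun i _ => by
    split
    · exact h i
    · exact Nat.zero_le d

lemma cls_le_of_polyLT {P Q : MvPolynomial (Fin n) F} (h : polyLT P Q) : cls P ≤ cls Q := by
  rcases h with h | ⟨h, -⟩ <;> omega

lemma polySim_iff {P Q : MvPolynomial (Fin n) F} :
    polySim P Q ↔ cls P = cls Q ∧ ldeg P = ldeg Q := by
  unfold polySim polyLT
  omega

end Polynomial

lemma List.forall₂_take_of_getD {α : Type*} {R : α → α → Prop} {l₁ l₂ : List α} {d : α} {k : ℕ}
    (h₁ : k ≤ l₁.length) (h₂ : k ≤ l₂.length) (h : ∀ i < k, R (l₁.getD i d) (l₂.getD i d)) :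
    List.Forall₂ R (l₁.take k) (l₂.take k) := by
  refine List.forall₂_of_length_eq_of_get (by simp [h₁, h₂]) fun i hi₁ hi₂ => ?_
  simp only [List.length_take] at hi₁ hi₂
  have := h i (by omega)
  rw [List.getD_eq_getElem _ _ (by omega), List.getD_eq_getElem _ _ (by omega)] at this
  simpa using this

section ClassCode
variable {F : Type*} [CommSemiring F] {n : ℕ}

/-- An absent class gets `q - 1`, above `ldeg - 1` for every canonical member: a triangular set
ranks below each of its proper prefixes. -/
noncomputable def classCode (q : ℕ) (A : List (MvPolynomial (Fin n) F)) (c : ℕ) : ℕ :=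
  A.foldr (fun P r => if cls P = c then ldeg P - 1 else r) (q - 1)

variable {q c : ℕ}

lemma classCode_cons (P : MvPolynomial (Fin n) F) (A : List (MvPolynomial (Fin n) F)) :
    classCode q (P :: A) c = if cls P = c then ldeg P - 1 else classCode q A c :=
  rfl

lemma classCode_append_of_forall_ne_left {L M : List (MvPolynomial (Fin n) F)}
    (h : ∀ P ∈ L, cls P ≠ c) : classCode q (L ++ M) c = classCode q M c := by
  induction L with
  | nil => rfl
  | cons P L ih =>
    rw [List.cons_append, classCode_cons, if_neg (h P List.mem_cons_self),
      ih fun R hR => h R (List.mem_cons_of_mem P hR)]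

lemma classCode_of_forall_ne {L : List (MvPolynomial (Fin n) F)} (h : ∀ P ∈ L, cls P ≠ c) :
    classCode q L c = q - 1 := by
  have h' := classCode_append_of_forall_ne_left (q := q) (M := []) h
  rwa [List.append_nil] at h'

lemma classCode_append_of_forall_ne_right {L M : List (MvPolynomial (Fin n) F)}
    (h : ∀ P ∈ M, cls P ≠ c) : classCode q (L ++ M) c = classCode q L c := by
  rw [classCode, List.foldr_append]
  exact congrArg (List.foldr _ · L) (classCode_of_forall_ne h)

lemma classCode_append_congr {L M : List (MvPolynomial (Fin n) F)}
    (h : List.Forall₂ polySim L M) (X : List (MvPolynomial (Fin n) F)) :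
    classCode q (L ++ X) c = classCode q (M ++ X) c := by
  induction h with
  | nil => rfl
  | cons hPQ _ ih =>
    obtain ⟨hcls, hldeg⟩ := polySim_iff.mp hPQ
    simp only [List.cons_append, classCode_cons, hcls, hldeg, ih]

lemma classCode_le {L : List (MvPolynomial (Fin n) F)} (h : ∀ P ∈ L, ldeg P ≤ q - 1) :
    classCode q L c ≤ q - 1 := by
  induction L with
  | nil => exact le_rfl
  | cons P L ih =>
    rw [classCode_cons]
    split
    · exact (Nat.sub_le _ 1).trans (h P List.mem_cons_self)
    · exact ih fun R hR => h R (List.mem_cons_of_mem P hR)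

lemma lt_classCode_of_forall_polyLT {P : MvPolynomial (Fin n) F} {L : List (MvPolynomial (Fin n) F)}
    (hP : 0 < ldeg P) (hPq : ldeg P ≤ q - 1) (h : ∀ Q ∈ L, polyLT P Q) :
    ldeg P - 1 < classCode q L (cls P) := by
  induction L with
  | nil => exact Nat.sub_lt_sub_right hP (by omega)
  | cons Q L ih =>
    rw [classCode_cons]
    split
    · have := h Q List.mem_cons_self
      unfold polyLT at this
      omega
    · exact ih fun R hR => h R (List.mem_cons_of_mem Q hR)

end ClassCode

section TriangularSet
variable {F : Type*} [CommSemiring F] {n : ℕ}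

lemma IsTriSet.eq_C_or {A : List (MvPolynomial (Fin n) F)} (hA : IsTriSet A) :
    (∃ c : F, A = [C c]) ∨
      (A ≠ [] ∧ (∀ P ∈ A, 0 < cls P) ∧ A.Pairwise fun P Q => cls P < cls Q) := by
  rcases hA with ⟨c, -, rfl⟩ | ⟨hne, -, hpos, hchain⟩
  · exact Or.inl ⟨c, rfl⟩
  · have : IsTrans (MvPolynomial (Fin n) F) fun P Q => cls P < cls Q :=
      ⟨fun _ _ _ => lt_trans⟩
    exact Or.inr ⟨hne, hpos, List.isChain_iff_pairwise.mp hchain⟩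

lemma not_triLT_C {A : List (MvPolynomial (Fin n) F)} (hA : IsTriSet A) (c : F) :
    ¬ triLT A [C c] := by
  rintro (⟨k, -, hk, -, hlt⟩ | ⟨hlen, hsim⟩)
  · obtain rfl : k = 0 := by simpa using hk
    rcases hlt with h | ⟨-, h⟩
    · exact Nat.not_lt_zero _ (cls_C (n := n) c ▸ h)
    · exact Nat.not_lt_zero _ (ldeg_C (n := n) c ▸ h)
  · have hcls := (polySim_iff.mp (hsim 0 (by simp))).1
    rcases hA.eq_C_or with ⟨c', rfl⟩ | ⟨-, hpos, -⟩
    · simp at hlen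
    · rw [List.getD_eq_getElem _ _ (by simp at hlen; omega)] at hcls
      exact (hpos _ (List.getElem_mem _)).ne' (hcls.trans (cls_C c))

/-- Both clauses of `triLT` take this shape; in the second one `B.drop k` is empty. -/
lemma triLT.exists_split {A B : List (MvPolynomial (Fin n) F)}
    (hB : B.Pairwise fun P Q => cls P < cls Q) (h : triLT A B) :
    ∃ k, ∃ hk : k < A.length, k ≤ B.length ∧ List.Forall₂ polySim (A.take k) (B.take k) ∧
      ∀ Q ∈ B.drop k, polyLT A[k] Q := by
  rcases h with ⟨k, hkA, hkB, hsim, hlt⟩ | ⟨hlen, hsim⟩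
  · refine ⟨k, hkA, hkB.le, List.forall₂_take_of_getD hkA.le hkB.le hsim, ?_⟩
    rw [List.getD_eq_getElem _ _ hkA, List.getD_eq_getElem _ _ hkB] at hlt
    have hdrop := hB.drop (i := k)
    rw [List.drop_eq_getElem_cons hkB] at hdrop ⊢
    rw [List.pairwise_cons] at hdrop
    rintro Q (_ | ⟨_, hQ⟩)
    · exact hlt
    · exact Or.inl ((cls_le_of_polyLT hlt).trans_lt (hdrop.1 Q hQ))
  · refine ⟨B.length, hlen, le_rfl, ?_, by simp⟩
    simpa using List.forall₂_take_of_getD hlen.le le_rfl hsim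

variable {q : ℕ}

lemma toLex_classCode_lt {A B : List (MvPolynomial (Fin n) F)}
    (hA : A.Pairwise fun P Q => cls P < cls Q) (hApos : ∀ P ∈ A, 0 < cls P)
    (hAq : ∀ P ∈ A, ldeg P ≤ q - 1) {k : ℕ} (hk : k < A.length)
    (hpre : List.Forall₂ polySim (A.take k) (B.take k)) (hrest : ∀ Q ∈ B.drop k, polyLT A[k] Q) :
    toLex (fun i : Fin n => classCode q A (i + 1)) <
      toLex (fun i : Fin n => classCode q B (i + 1)) := by
  have hAk : A[k] ∈ A.drop k := by
    rw [List.drop_eq_getElem_cons hk]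
    exact List.mem_cons_self
  have hcls := hApos _ (List.getElem_mem hk)
  have hbelow : ∀ P ∈ A.take k, cls P < cls A[k] := by
    rw [← List.take_append_drop k A, List.pairwise_append] at hA
    exact fun P hP => hA.2.2 P hP _ hAk
  have habove : ∀ P ∈ A.drop k, cls A[k] ≤ cls P := by
    rw [List.drop_eq_getElem_cons hk, List.forall_mem_cons]
    refine ⟨le_rfl, fun P hP => ?_⟩
    have := hA.drop (i := k)
    rw [List.drop_eq_getElem_cons hk, List.pairwise_cons] at this
    exact (this.1 P hP).le
  have hA_eq : ∀ c, classCode q A c = classCode q (A.take k ++ A.drop k) c := fun c => by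
    rw [List.take_append_drop]
  have hB_eq : ∀ c, classCode q B c = classCode q (A.take k ++ B.drop k) c := fun c => by
    rw [classCode_append_congr hpre, List.take_append_drop]
  refine ⟨⟨cls A[k] - 1, by have := cls_le A[k]; omega⟩, fun j hj => ?_, ?_⟩
  · have hj : (j : ℕ) + 1 < cls A[k] := by simp only [Fin.lt_def] at hj; omega
    show classCode q A (j + 1) = classCode q B (j + 1)
    rw [hA_eq, hB_eq, classCode_append_of_forall_ne_right fun P hP => (hj.trans_le (habove P hP)).ne',
      classCode_append_of_forall_ne_right
        fun Q hQ => (hj.trans_le (cls_le_of_polyLT (hrest Q hQ))).ne']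
  · show classCode q A (cls A[k] - 1 + 1) < classCode q B (cls A[k] - 1 + 1)
    rw [Nat.sub_add_cancel hcls]
    rw [hA_eq, hB_eq, classCode_append_of_forall_ne_left fun P hP => (hbelow P hP).ne,
      classCode_append_of_forall_ne_left fun P hP => (hbelow P hP).ne, List.drop_eq_getElem_cons hk,
      classCode_cons, if_pos rfl]
    exact lt_classCode_of_forall_polyLT (ldeg_pos_of_cls_pos hcls) (hAq _ (List.getElem_mem hk)) hrest

end TriangularSet

section Rank
variable {F : Type*} [CommSemiring F] {n q : ℕ}

noncomputable def triRank (q : ℕ) (A : List (MvPolynomial (Fin n) F)) :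
    WithBot (Lex (Fin n → ℕ)) :=
  if ∀ P ∈ A, 0 < cls P then ↑(toLex fun i : Fin n => classCode q A (i + 1)) else ⊥

lemma triRank_C (c : F) : triRank q [(C c : MvPolynomial (Fin n) F)] = ⊥ := by
  simp [triRank, cls_C]

lemma triRank_of_forall_cls_pos {A : List (MvPolynomial (Fin n) F)} (h : ∀ P ∈ A, 0 < cls P) :
    triRank q A = ↑(toLex fun i : Fin n => classCode q A (i + 1)) :=
  if_pos h

lemma triRank_lt_of_triLT {A B : List (MvPolynomial (Fin n) F)} (hA : IsTriSet A)
    (hB : IsTriSet B) (hAq : ∀ P ∈ A, ldeg P ≤ q - 1) (h : triLT A B) :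
    triRank q A < triRank q B := by
  rcases hB.eq_C_or with ⟨c, rfl⟩ | ⟨-, hBpos, hBpw⟩
  · exact absurd h (not_triLT_C hA c)
  rw [triRank_of_forall_cls_pos hBpos]
  rcases hA.eq_C_or with ⟨c, rfl⟩ | ⟨-, hApos, hApw⟩
  · rw [triRank_C]
    exact WithBot.bot_lt_coe _
  obtain ⟨k, hk, -, hpre, hrest⟩ := h.exists_split hBpw
  rw [triRank_of_forall_cls_pos hApos]
  exact WithBot.coe_lt_coe.mpr (toLex_classCode_lt hApw hApos hAq hk hpre hrest)

noncomputable def triRankRange (q n : ℕ) : Finset (WithBot (Lex (Fin n → ℕ))) :=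
  insert ⊥ <| ((Fintype.piFinset fun _ : Fin n => Finset.range q).erase fun _ => q - 1).image
    fun f => WithBot.some (toLex f)

lemma card_triRankRange_le (hq : 0 < q) : (triRankRange q n).card ≤ q ^ n := by
  have hconst : (fun _ : Fin n => q - 1) ∈ Fintype.piFinset fun _ : Fin n => Finset.range q := by
    simp [hq]
  have hpow : 0 < q ^ n := pow_pos hq n
  calc (triRankRange q n).card
      ≤ (((Fintype.piFinset fun _ : Fin n => Finset.range q).erase fun _ => q - 1).image
          fun f => WithBot.some (toLex f)).card + 1 :=
        Finset.card_insert_le _ _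
    _ ≤ ((Fintype.piFinset fun _ : Fin n => Finset.range q).erase fun _ => q - 1).card + 1 :=
        Nat.add_le_add_right Finset.card_image_le 1
    _ = q ^ n := by
        rw [Finset.card_erase_of_mem hconst, Fintype.card_piFinset]
        simp only [Finset.card_range, Finset.prod_const, Finset.card_univ, Fintype.card_fin]
        omega

lemma triRank_mem_triRankRange {A : List (MvPolynomial (Fin n) F)} (hA : IsTriSet A)
    (hAq : ∀ P ∈ A, ldeg P ≤ q - 1) : triRank q A ∈ triRankRange q n := by
  rcases hA.eq_C_or with ⟨c, rfl⟩ | ⟨hne, hpos, -⟩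
  · rw [triRank_C]
    exact Finset.mem_insert_self _ _
  rw [triRank_of_forall_cls_pos hpos]
  obtain ⟨P, L, rfl⟩ := List.exists_cons_of_ne_nil hne
  have hPcls := hpos P List.mem_cons_self
  have hPpos := ldeg_pos_of_cls_pos hPcls
  have hPq := hAq P List.mem_cons_self
  refine Finset.mem_insert_of_mem (Finset.mem_image_of_mem _ (Finset.mem_erase.mpr ⟨?_, ?_⟩))
  · intro hconst
    have := congrFun hconst ⟨cls P - 1, by have := cls_le P; omega⟩
    rw [Nat.sub_add_cancel hPcls, classCode_cons, if_pos rfl] at this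
    omega
  · exact Fintype.mem_piFinset.mpr fun i => Finset.mem_range.mpr
      ((classCode_le hAq).trans_lt (by omega))

end Rank

/-- Any strictly decreasing sequence of triangular sets
`A_1 ≻ A_2 ≻ … ≻ A_m` in `R_q` (polynomials in canonical form: degree at most `q−1` in
each variable) has length `m ≤ q^n`. -/
theorem stmt_11 {F : Type*} [Field F] [Fintype F] {n m : ℕ}
    (A : Fin m → List (MvPolynomial (Fin n) F))
    (hcanon : ∀ i : Fin m, ∀ P ∈ A i, ∀ j : Fin n, degreeOf j P ≤ Fintype.card F - 1)
    (hT : ∀ i : Fin m, IsTriSet (A i))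
    (hdec : ∀ (i : Fin m) (h : (i : ℕ) + 1 < m), triLT (A ⟨(i : ℕ) + 1, h⟩) (A i)) :
    m ≤ Fintype.card F ^ n := by
  set q := Fintype.card F
  have hldeg : ∀ i, ∀ P ∈ A i, ldeg P ≤ q - 1 :=
    fun i P hP => ldeg_le_of_degreeOf_le (hcanon i P hP)
  have hinj : Function.Injective fun i => triRank q (A i) := by
    cases m with
    | zero => exact fun i => i.elim0
    | succ m =>
      refine StrictAnti.injective (Fin.strictAnti_iff_succ_lt.mpr fun i => ?_)
      exact triRank_lt_of_triLT (hT _) (hT _) (hldeg _) (hdec i.castSucc (by simp))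
  calc m = (Finset.univ : Finset (Fin m)).card := (Finset.card_fin m).symm
    _ ≤ (triRankRange q n).card :=
      Finset.card_le_card_of_injOn _ (fun i _ => triRank_mem_triRankRange (hT i) (hldeg i))
        hinj.injOn
    _ ≤ q ^ n := card_triRankRange_le Fintype.card_pos
end

section
/- Let P(x) ∈ F_q[x] be a univariate polynomial of degree d with 1 ≤ d ≤ q−1. Suppose there exists a polynomial Q(x) ∈ F_q[x] with deg(Q) < q − d such that x^{q−d}·P(x) ≡ Q(x)·P(x) modulo the ideal (x^q − x). Then P(x) has exactly d distinct roots in F_q. -/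
open Polynomial

/-!
Write `q = |F|`. The hypothesis says that `X ^ q - X` divides `(X ^ (q - d) - Q) * P`, a nonzero
polynomial of the same degree `q`; over a field this forces the two to be associates, so
`P ∣ X ^ q - X`. Since `X ^ q - X = ∏_{a ∈ F} (X - a)`, every divisor of it splits over `F` with
simple roots, so `P` has exactly `deg P = d` distinct roots.
-/

theorem Polynomial.natCard_eval_eq_zero_of_splits {K : Type*} [Field K] {P : K[X]} (hP : P ≠ 0)
    (hsplit : P.Splits) (hnodup : P.roots.Nodup) :
    Nat.card {a : K // P.eval a = 0} = P.natDegree := by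
  classical
  calc Nat.card {a : K // P.eval a = 0}
      = Nat.card {a : K // a ∈ P.roots.toFinset} :=
        Nat.card_congr <| Equiv.subtypeEquivRight fun a => by simp [mem_roots hP]
    _ = Multiset.card P.roots := by
        rw [Nat.card_eq_fintype_card, Fintype.card_coe, Multiset.toFinset_card_of_nodup hnodup]
    _ = P.natDegree := splits_iff_card_roots.mp hsplit

theorem Polynomial.natDegree_X_pow_sub_of_natDegree_lt {R : Type*} [Ring R] [Nontrivial R]
    {Q : R[X]} {n : ℕ} (hQ : Q.natDegree < n) : (X ^ n - Q).natDegree = n := by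
  rw [natDegree_sub_eq_left_of_natDegree_lt (by rwa [natDegree_X_pow]), natDegree_X_pow]

namespace FiniteField

variable {K : Type*} [Field K] [Fintype K]

theorem splits_X_pow_card_sub_X_self_s13 : (X ^ Fintype.card K - X : K[X]).Splits := by
  rw [splits_iff_card_roots, roots_X_pow_card_sub_X, X_pow_card_sub_X_natDegree_eq K
    Fintype.one_lt_card]
  rfl

theorem natCard_eval_eq_zero_of_dvd_X_pow_card_sub_X {P : K[X]}
    (hP : P ∣ X ^ Fintype.card K - X) : Nat.card {a : K // P.eval a = 0} = P.natDegree := by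
  have hS : (X ^ Fintype.card K - X : K[X]) ≠ 0 := X_pow_card_sub_X_ne_zero K Fintype.one_lt_card
  have hnodup : P.roots.Nodup := by
    refine Multiset.nodup_of_le (roots.le_of_dvd hS hP) ?_
    rw [roots_X_pow_card_sub_X]
    exact Finset.univ.nodup
  exact natCard_eval_eq_zero_of_splits (ne_zero_of_dvd_ne_zero hS hP)
    (splits_X_pow_card_sub_X_self_s13.of_dvd hS hP) hnodup

end FiniteField

theorem stmt_13_general {F : Type*} [Field F] [Fintype F] (P Q : Polynomial F) (d : ℕ)
    (hd1 : 1 ≤ d)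
    (hP : P.natDegree = d)
    (hQ : Q.natDegree < Fintype.card F - d)
    (hmod : Polynomial.X ^ (Fintype.card F - d) * P - Q * P ∈
      Ideal.span {Polynomial.X ^ Fintype.card F - Polynomial.X}) :
    Nat.card {a : F // Polynomial.eval a P = 0} = d := by
  set q := Fintype.card F
  have hP0 : P ≠ 0 := by rintro rfl; rw [natDegree_zero] at hP; omega
  have hA : (X ^ (q - d) - Q).natDegree = q - d := natDegree_X_pow_sub_of_natDegree_lt hQ
  have hA0 : X ^ (q - d) - Q ≠ 0 := by intro h; rw [h, natDegree_zero] at hA; omega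
  have hdvd : X ^ q - X ∣ (X ^ (q - d) - Q) * P := by
    rwa [sub_mul, ← Ideal.mem_span_singleton]
  have hdeg : ((X ^ (q - d) - Q) * P).natDegree = (X ^ q - X : F[X]).natDegree := by
    rw [natDegree_mul hA0 hP0, hA, hP, FiniteField.X_pow_card_sub_X_natDegree_eq F
      Fintype.one_lt_card]
    omega
  have hPS : P ∣ X ^ q - X :=
    (dvd_mul_left P _).trans (associated_of_dvd_of_natDegree_le hdvd
      (mul_ne_zero hA0 hP0) hdeg.le).symm.dvd
  rw [FiniteField.natCard_eval_eq_zero_of_dvd_X_pow_card_sub_X hPS, hP]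

/-- Let `P ∈ F_q[x]` be of degree `d` with `1 ≤ d ≤ q−1`. If there is a
polynomial `Q` with `deg Q < q − d` such that `x^{q−d}·P ≡ Q·P (mod (x^q − x))`, then
`P` has exactly `d` distinct roots in `F_q`. -/
theorem stmt_13 {F : Type*} [Field F] [Fintype F] (P Q : Polynomial F) (d : ℕ)
    (hd1 : 1 ≤ d) (hd2 : d ≤ Fintype.card F - 1)
    (hP : P.natDegree = d)
    (hQ : Q.natDegree < Fintype.card F - d)
    (hmod : Polynomial.X ^ (Fintype.card F - d) * P - Q * P ∈
      Ideal.span {Polynomial.X ^ Fintype.card F - Polynomial.X}) :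
    Nat.card {a : F // Polynomial.eval a P = 0} = d :=
  stmt_13_general P Q d hd1 hP hQ hmod
end
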